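/- A triangle of order n, all of whose rows except the last consist entirely of entries of the form x_i or y_j, is admissible if and only if it is an oriented complete monotone triangle of order n. -/

import Mathlib

open Finset
open scoped Classical

/-- Symbols occurring in a triangle: `x i`, `y i` (indices `1,...,n` encoded by `Fin n`),
`a i j`, `b i j` (the edge `{i+1,j+1}` oriented from smaller to larger, resp. larger to
smaller), and the numbers `1,...,n` of the bottom row. -/
inductive TSym (n : ℕ) where
  | x (i : Fin n)
  | y (i : Fin n)
  | a (i j : Fin n)
  | b (i j : Fin n)
  | num (i : Fin n)
deriving DecidableEq

/-- A triangle of order `n`: row `r` (0-indexed) has `r+1` entries. -/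
def Tri (n : ℕ) := ∀ r : Fin n, Fin (r.val + 1) → TSym n

namespace TSym

variable {n : ℕ}

/-- The symbol lies in `𝒳`. -/
def isX : TSym n → Prop
  | .x _ => True
  | .y _ => True
  | _ => False

/-- The symbol lies in `𝒱_k`. -/
def isV (k : ℕ) : TSym n → Prop
  | .a i j => j.val = i.val + k ∧ 0 < k
  | .b i j => j.val = i.val + k ∧ 0 < k
  | _ => False

/-- Well-formedness of a non-bottom entry: `a i j` and `b i j` require `i < j`;
numbers may not occur. -/
def wf : TSym n → Prop
  | .a i j => i < j
  | .b i j => i < j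
  | .num _ => False
  | _ => True

/-- The left value of a symbol lying in a row of rank `t` (values are `1`-based). -/
def lval (t : ℕ) : TSym n → ℤ
  | .x i => (i.val : ℤ) + 1
  | .y j => (j.val : ℤ) + 1 - t
  | .a i _ => (i.val : ℤ) + 1
  | .b i _ => (i.val : ℤ) + 1
  | .num i => (i.val : ℤ) + 1

/-- The right value of a symbol lying in a row of rank `t`. -/
def rval (t : ℕ) : TSym n → ℤ
  | .x i => (i.val : ℤ) + 1 + t
  | .y j => (j.val : ℤ) + 1
  | .a _ j => (j.val : ℤ) + 1
  | .b _ j => (j.val : ℤ) + 1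
  | .num i => (i.val : ℤ) + 1

end TSym

variable {n : ℕ}

/-- Row `r` is an `𝒳`-row. -/
def IsXRow (t : Tri n) (r : Fin n) : Prop := ∀ i, (t r i).isX

/-- Row `r` has all entries in `𝒱_k`. -/
def IsVRowOf (t : Tri n) (r : Fin n) (k : ℕ) : Prop := ∀ i, (t r i).isV k

/-- Row `r` is a `𝒱`-row. -/
def IsVRow (t : Tri n) (r : Fin n) : Prop := ∃ k, IsVRowOf t r k

/-- The bottom row is `(1,2,...,n)`. -/
def BottomOK (t : Tri n) : Prop :=
  ∀ (r : Fin n), r.val = n - 1 → ∀ i : Fin (r.val + 1),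
    t r i = .num ⟨i.val, by have := i.isLt; have := r.isLt; omega⟩

/-- All non-bottom entries are well-formed. -/
def WellFormed (t : Tri n) : Prop :=
  ∀ r : Fin n, r.val < n - 1 → ∀ i, (t r i).wf

/-- `rk m` is the rank of (1-based) row `m`, for `0 ≤ m ≤ n`; Lean row index `r`
corresponds to row `r+1`.  An admissible ranking: the bottom row has rank `0`,
row `n-1` has rank `1`, and going up, an `𝒳`-row keeps the rank while a row whose
entries lie in `𝒱_k` has rank `k` and raises the rank above it to `k+1`. -/
def IsRanking (t : Tri n) (rk : ℕ → ℕ) : Prop :=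
  rk n = 0 ∧ (1 ≤ n → rk (n - 1) = 1) ∧
  ∀ r : Fin n, r.val < n - 1 →
    (IsXRow t r ∧ rk r.val = rk (r.val + 1)) ∨
    (IsVRowOf t r (rk (r.val + 1)) ∧ rk r.val = rk (r.val + 1) + 1)

/-- The monotone diagonal and monotone row properties: for every local arrangement
`v` directly above consecutive entries `u, w`, we require `l(u) ≤ l(v)` (strict when
`u` is a `y`), `r(v) ≤ r(w)` (strict when `w` is an `x`), and `l(u) < l(w)`. -/
def MonoProps (t : Tri n) (rk : ℕ → ℕ) : Prop :=
  ∀ (r : Fin n) (hr : 1 ≤ r.val) (p : ℕ) (hp : p + 1 < r.val + 1),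
    let u := t r ⟨p, by omega⟩
    let w := t r ⟨p + 1, by omega⟩
    let v := t ⟨r.val - 1, by have := r.isLt; omega⟩ ⟨p, by simp only [Fin.val_mk]; omega⟩
    (u.lval (rk (r.val + 1)) ≤ v.lval (rk r.val)) ∧
    ((∃ j, u = .y j) → u.lval (rk (r.val + 1)) < v.lval (rk r.val)) ∧
    (v.rval (rk r.val) ≤ w.rval (rk (r.val + 1))) ∧
    ((∃ j, w = .x j) → v.rval (rk r.val) < w.rval (rk (r.val + 1))) ∧
    (u.lval (rk (r.val + 1)) < w.lval (rk (r.val + 1)))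

/-- Admissibility of a triangle. -/
def IsAdmissible (t : Tri n) : Prop :=
  BottomOK t ∧ WellFormed t ∧ ∃ rk, IsRanking t rk ∧ MonoProps t rk

/-- The rank of the row with Lean index `r` (i.e. of row `r+1`), computed directly:
one more than the number of `𝒱`-rows strictly below it (above the bottom row). -/
noncomputable def rankOf (t : Tri n) (r : ℕ) : ℕ :=
  1 + ((univ : Finset (Fin n)).filter fun s => r < s.val ∧ IsVRow t s).card

open MvPolynomial in
/-- The weight of a symbol. -/
noncomputable def TSym.weight : TSym n → MvPolynomial (Fin n ⊕ Fin n) ℤ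
  | .x i => X (Sum.inl i)
  | .y j => X (Sum.inr j)
  | .a i _ => X (Sum.inl i)
  | .b _ j => X (Sum.inr j)
  | .num _ => 1

/-- The weight of a triangle: the product of the weights of its non-bottom entries. -/
noncomputable def weight (t : Tri n) : MvPolynomial (Fin n ⊕ Fin n) ℤ :=
  ∏ r : Fin n, if r.val < n - 1 then ∏ i, (t r i).weight else 1

/-- The raising operator `R_d` (`1 ≤ d < n`), acting on (paper-indexed) rows `d-1`
and `d`, i.e. Lean rows `d-2` and `d-1`. -/
noncomputable def Raise (d : ℕ) (t : Tri n) : Tri n := fun r i =>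
  if hu : 2 ≤ d ∧ r.val + 2 = d ∧ r.val + 1 < n then
    -- row d-1: swap with the entry diagonally below, else convert to an 𝒳-symbol
    match t r i with
    | .b j k =>
        if t ⟨r.val + 1, hu.2.2⟩ ⟨i.val, by have := i.isLt; simp only [Fin.val_mk]; omega⟩
            = .x j then .x j else .y k
    | .a j k =>
        if t ⟨r.val + 1, hu.2.2⟩ ⟨i.val + 1, by have := i.isLt; simp only [Fin.val_mk]; omega⟩
            = .y k then .y k else .x j
    | s => s
  else if hl : r.val + 1 = d then
    -- row d: swap with the entry diagonally above, else convert to a 𝒱-symbol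
    let tk := rankOf t r.val
    match t r i with
    | .x j =>
        if hi : i.val < r.val then
          match t ⟨r.val - 1, by have := r.isLt; omega⟩
              ⟨i.val, by simp only [Fin.val_mk]; omega⟩ with
          | .b j' k => if j' = j then .b j' k
              else if h2 : j.val + tk < n then .a j ⟨j.val + tk, h2⟩ else .x j
          | _ => if h2 : j.val + tk < n then .a j ⟨j.val + tk, h2⟩ else .x j
        else if h2 : j.val + tk < n then .a j ⟨j.val + tk, h2⟩ else .x j
    | .y k =>
        if hi : 1 ≤ i.val then
          match t ⟨r.val - 1, by have := r.isLt; omega⟩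
              ⟨i.val - 1, by have := i.isLt; simp only [Fin.val_mk]; omega⟩ with
          | .a j k' => if k' = k then .a j k'
              else if h2 : tk ≤ k.val then .b ⟨k.val - tk, by have := k.isLt; omega⟩ k
              else .y k
          | _ => if h2 : tk ≤ k.val then .b ⟨k.val - tk, by have := k.isLt; omega⟩ k
              else .y k
        else if h2 : tk ≤ k.val then .b ⟨k.val - tk, by have := k.isLt; omega⟩ k else .y k
    | s => s
  else t r i

/-- The lowering operator `L_d` (`1 ≤ d < n`), inverse to `R_d`. -/
noncomputable def Lower (d : ℕ) (t : Tri n) : Tri n := fun r i =>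
  if hu : 2 ≤ d ∧ r.val + 2 = d ∧ r.val + 1 < n then
    -- row d-1: swap with the entry diagonally below, else convert to a 𝒱-symbol
    let tk := rankOf t (r.val + 1)
    match t r i with
    | .x j =>
        (match t ⟨r.val + 1, hu.2.2⟩ ⟨i.val, by have := i.isLt; simp only [Fin.val_mk]; omega⟩ with
          | .b j' k => if j' = j then .b j' k
              else if h2 : j.val + tk < n then .a j ⟨j.val + tk, h2⟩ else .x j
          | _ => if h2 : j.val + tk < n then .a j ⟨j.val + tk, h2⟩ else .x j)
    | .y k =>
        (match t ⟨r.val + 1, hu.2.2⟩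
            ⟨i.val + 1, by have := i.isLt; simp only [Fin.val_mk]; omega⟩ with
          | .a j k' => if k' = k then .a j k'
              else if h2 : tk ≤ k.val then .b ⟨k.val - tk, by have := k.isLt; omega⟩ k
              else .y k
          | _ => if h2 : tk ≤ k.val then .b ⟨k.val - tk, by have := k.isLt; omega⟩ k
              else .y k)
    | s => s
  else if hl : r.val + 1 = d then
    -- row d: swap with the entry diagonally above, else convert to an 𝒳-symbol
    match t r i with
    | .b j k =>
        if hi : i.val < r.val then
          (if t ⟨r.val - 1, by have := r.isLt; omega⟩
              ⟨i.val, by simp only [Fin.val_mk]; omega⟩ = .x j then .x j else .y k)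
        else .y k
    | .a j k =>
        if hi : 1 ≤ i.val then
          (if t ⟨r.val - 1, by have := r.isLt; omega⟩
              ⟨i.val - 1, by have := i.isLt; simp only [Fin.val_mk]; omega⟩ = .y k
           then .y k else .x j)
        else .x j
    | s => s
  else t r i

/-- The numerical value of an `𝒳`-symbol or a bottom-row number. -/
def xyval {n : ℕ} : TSym n → ℤ
  | .x i => (i.val : ℤ) + 1
  | .y i => (i.val : ℤ) + 1
  | .a _ _ => 0
  | .b _ _ => 0
  | .num i => (i.val : ℤ) + 1

/-- `t` is (the triangle encoding of) an oriented complete monotone triangle: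
all non-bottom rows are `𝒳`-rows, the underlying numerical triangle is a complete
monotone triangle, and orientations are forced as prescribed: an entry equal to its
lower-left neighbour is an `x` (right-oriented), an entry equal to its lower-right
neighbour is a `y` (left-oriented). -/
def IsOCMTTri {n : ℕ} (t : Tri n) : Prop :=
  BottomOK t ∧
  (∀ r : Fin n, r.val < n - 1 → IsXRow t r) ∧
  (∀ (r : Fin n) (p q : Fin (r.val + 1)), p < q → xyval (t r p) < xyval (t r q)) ∧
  (∀ (r : Fin n) (h : r.val + 1 < n) (p : Fin (r.val + 1)),
      xyval (t ⟨r.val + 1, h⟩ ⟨p.val, by have := p.isLt; simp only [Fin.val_mk]; omega⟩)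
          ≤ xyval (t r p) ∧
      xyval (t r p)
          ≤ xyval (t ⟨r.val + 1, h⟩ ⟨p.val + 1, by have := p.isLt; simp only [Fin.val_mk]; omega⟩)) ∧
  (∀ (r : Fin n) (h : r.val + 1 < n) (p : Fin (r.val + 1)),
      (xyval (t ⟨r.val + 1, h⟩ ⟨p.val, by have := p.isLt; simp only [Fin.val_mk]; omega⟩)
          = xyval (t r p) → ∃ j, t r p = .x j) ∧
      (xyval (t r p)
          = xyval (t ⟨r.val + 1, h⟩ ⟨p.val + 1, by have := p.isLt; simp only [Fin.val_mk]; omega⟩)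
          → ∃ j, t r p = .y j))

/-! When every non-bottom row is an `𝒳`-row, no row is a `𝒱`-row, so the ranking is forced:
rank `0` on the bottom row and `1` on every other row. With these ranks `l(s)` is the value of `s`,
lowered by one if `s = y_j`, and `r(s)` is the value of `s`, raised by one if `s = x_i`. At each
local arrangement the monotone diagonal property then says exactly that the top entry lies weakly
between its two lower neighbours and is an `x` (resp. a `y`) when it equals the lower-left
(resp. lower-right) one; in particular the lower row increases strictly. Conversely, the monotone
row property only asks more than strict increase for `x_i` followed by `y_j`, where it needs
`i + 1 < j`: the entry between them in the row below lies strictly between them. -/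

namespace TSym

-- The entries of a triangle whose non-bottom rows are `𝒳`-rows: there the bottom row has
-- rank `0` and holds numbers, every other row has rank `1`.
def FitsRank (t : ℕ) : TSym n → Prop
  | .x _ | .y _ => t = 1
  | .num _ => t = 0
  | _ => False

-- The monotone diagonal property for `v` above `u, w`; the lower row has rank `tl`, the upper
-- one rank `tu`.
def MonoDiag (tl tu : ℕ) (u v w : TSym n) : Prop :=
  u.lval tl ≤ v.lval tu ∧ ((∃ j, u = .y j) → u.lval tl < v.lval tu) ∧
  v.rval tu ≤ w.rval tl ∧ ((∃ j, w = .x j) → v.rval tu < w.rval tl)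

def OrientedBetween (u v w : TSym n) : Prop :=
  (xyval u ≤ xyval v ∧ xyval v ≤ xyval w) ∧
    (xyval u = xyval v → ∃ j, v = .x j) ∧ (xyval v = xyval w → ∃ j, v = .y j)

lemma isX_iff {s : TSym n} : s.isX ↔ (∃ j, s = .x j) ∨ ∃ j, s = .y j := by
  cases s <;> simp [isX]

lemma not_isV_of_isX {s : TSym n} {k : ℕ} (h : s.isX) : ¬ s.isV k := by
  cases s <;> simp_all [isX, isV]

lemma wf_of_isX {s : TSym n} (h : s.isX) : s.wf := by
  cases s <;> simp_all [isX, wf]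

lemma monoDiag_one_iff {tl : ℕ} {u v w : TSym n} (hu : u.FitsRank tl) (hv : v.isX)
    (hw : w.FitsRank tl) : MonoDiag tl 1 u v w ↔ OrientedBetween u v w := by
  cases u <;> cases v <;> cases w <;>
    simp_all [FitsRank, isX, MonoDiag, OrientedBetween, lval, rval, xyval] <;> omega

lemma lval_lt_lval {tl : ℕ} {u w : TSym n} (hu : u.FitsRank tl) (hw : w.FitsRank tl)
    (hlt : xyval u < xyval w) (hgap : (∃ j, u = .x j) → (∃ j, w = .y j) → xyval u + 1 < xyval w) :
    u.lval tl < w.lval tl := by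
  cases u <;> cases w <;> simp_all [FitsRank, lval, xyval]
  omega

namespace OrientedBetween

variable {u v w : TSym n}

lemma lt (h : OrientedBetween u v w) : xyval u < xyval w := by
  obtain ⟨⟨huv, hvw⟩, hx, hy⟩ := h
  by_contra! hwu
  obtain ⟨j, rfl⟩ := hx (by omega)
  obtain ⟨k, hk⟩ := hy (by omega)
  cases hk

lemma add_one_lt {a m b : TSym n} (hu : OrientedBetween a u m) (hw : OrientedBetween m w b)
    (hux : ∃ j, u = .x j) (hwy : ∃ j, w = .y j) : xyval u + 1 < xyval w := by
  obtain ⟨j, rfl⟩ := hux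
  obtain ⟨k, rfl⟩ := hwy
  have hum : xyval (x j) < xyval m :=
    lt_of_le_of_ne hu.1.2 fun h => by obtain ⟨_, h'⟩ := hu.2.2 h; cases h'
  have hmw : xyval m < xyval (y k) :=
    lt_of_le_of_ne hw.1.1 fun h => by obtain ⟨_, h'⟩ := hw.2.1 h; cases h'
  omega

end OrientedBetween

end TSym

def Tri.lowerLeft (t : Tri n) (r : Fin n) (h : r.val + 1 < n) (p : Fin (r.val + 1)) : TSym n :=
  t ⟨r.val + 1, h⟩ p.castSucc

def Tri.lowerRight (t : Tri n) (r : Fin n) (h : r.val + 1 < n) (p : Fin (r.val + 1)) : TSym n :=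
  t ⟨r.val + 1, h⟩ p.succ

def Tri.HasOnlyXRows (t : Tri n) : Prop := ∀ r : Fin n, r.val < n - 1 → IsXRow t r

def Tri.IsOrientedMonotone (t : Tri n) : Prop :=
  ∀ (r : Fin n) (h : r.val + 1 < n) (p : Fin (r.val + 1)),
    TSym.OrientedBetween (t.lowerLeft r h p) (t r p) (t.lowerRight r h p)

def xRank (n m : ℕ) : ℕ := if m < n then 1 else 0

section

variable {t : Tri n} {rk : ℕ → ℕ}

lemma Tri.HasOnlyXRows.wellFormed (hX : t.HasOnlyXRows) : WellFormed t :=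
  fun r hr i => TSym.wf_of_isX (hX r hr i)

lemma Tri.HasOnlyXRows.fitsRank (hB : BottomOK t) (hX : t.HasOnlyXRows) (h0 : rk n = 0)
    (h1 : ∀ m, 1 ≤ m → m < n → rk m = 1) (r : Fin n) (i : Fin (r.val + 1)) :
    (t r i).FitsRank (rk (r.val + 1)) := by
  by_cases hr : r.val = n - 1
  · have hrk : rk (r.val + 1) = 0 := by rw [show r.val + 1 = n by omega, h0]
    rw [hB r hr i, hrk]
    rfl
  · rw [h1 _ (by omega) (by omega)]
    rcases TSym.isX_iff.1 (hX r (by omega) i) with ⟨j, hj⟩ | ⟨j, hj⟩ <;> rw [hj] <;> rfl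

lemma IsRanking.eq_one_of_hasOnlyXRows (hR : IsRanking t rk) (hX : t.HasOnlyXRows) {m : ℕ}
    (h1 : 1 ≤ m) (hm : m < n) : rk m = 1 := by
  obtain ⟨k, rfl⟩ : ∃ k, m = n - 1 - k := ⟨n - 1 - m, by omega⟩
  induction k with
  | zero => exact hR.2.1 (by omega)
  | succ k ih =>
    rcases hR.2.2 ⟨n - 1 - (k + 1), hm⟩ (by simp only; omega) with ⟨-, he⟩ | ⟨hV, -⟩
    · rw [he, show n - 1 - (k + 1) + 1 = n - 1 - k by omega]
      exact ih (by omega) (by omega)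
    · exact absurd (hV ⟨0, by omega⟩) (TSym.not_isV_of_isX (hX _ (by simp only; omega) _))

lemma isRanking_xRank (hX : t.HasOnlyXRows) : IsRanking t (xRank n) := by
  refine ⟨by simp [xRank], fun _ => by simp [xRank]; omega, fun r hr => Or.inl ⟨hX r hr, ?_⟩⟩
  simp [xRank, show r.val + 1 < n by omega]

lemma monoProps_iff : MonoProps t rk ↔ ∀ (r : Fin n) (h : r.val + 1 < n) (p : Fin (r.val + 1)),
    TSym.MonoDiag (rk (r.val + 1 + 1)) (rk (r.val + 1))
        (t.lowerLeft r h p) (t r p) (t.lowerRight r h p) ∧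
      (t.lowerLeft r h p).lval (rk (r.val + 1 + 1)) <
        (t.lowerRight r h p).lval (rk (r.val + 1 + 1)) := by
  constructor
  · intro hM r h p
    obtain ⟨c1, c2, c3, c4, c5⟩ := hM ⟨r.val + 1, h⟩ (by simp) p.val (Nat.succ_lt_succ p.isLt)
    exact ⟨⟨c1, c2, c3, c4⟩, c5⟩
  · rintro H ⟨_ | r, h⟩ hr p hp
    · simp at hr
    · obtain ⟨⟨c1, c2, c3, c4⟩, c5⟩ := H ⟨r, by omega⟩ h ⟨p, Nat.lt_of_succ_lt_succ hp⟩
      exact ⟨c1, c2, c3, c4, c5⟩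

lemma Tri.IsOrientedMonotone.strictMono_row (hO : t.IsOrientedMonotone) (r : Fin n) :
    StrictMono fun i => xyval (t r i) := by
  obtain ⟨_ | s, hr⟩ := r
  · exact Fin.strictMono_iff_lt_succ.2 fun i => i.elim0
  · exact Fin.strictMono_iff_lt_succ.2 fun i => (hO ⟨s, by omega⟩ hr i).lt

theorem isOCMTTri_iff :
    IsOCMTTri t ↔ BottomOK t ∧ t.HasOnlyXRows ∧ t.IsOrientedMonotone := by
  constructor
  · rintro ⟨hB, hX, -, hD, hF⟩
    exact ⟨hB, hX, fun r h p => ⟨hD r h p, hF r h p⟩⟩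
  · rintro ⟨hB, hX, hO⟩
    exact ⟨hB, hX, fun r _ _ hpq => hO.strictMono_row r hpq, fun r h p => (hO r h p).1,
      fun r h p => (hO r h p).2⟩

theorem monoProps_iff_isOrientedMonotone (hB : BottomOK t) (hX : t.HasOnlyXRows)
    (h0 : rk n = 0) (h1 : ∀ m, 1 ≤ m → m < n → rk m = 1) :
    MonoProps t rk ↔ t.IsOrientedMonotone := by
  have hfit := hX.fitsRank hB h0 h1
  have hdiag : ∀ r h p, TSym.MonoDiag (rk (r.val + 1 + 1)) (rk (r.val + 1))
      (t.lowerLeft r h p) (t r p) (t.lowerRight r h p) ↔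
        TSym.OrientedBetween (t.lowerLeft r h p) (t r p) (t.lowerRight r h p) := by
    intro r h p
    rw [h1 (r.val + 1) (by omega) h]
    exact TSym.monoDiag_one_iff (hfit ⟨r.val + 1, h⟩ p.castSucc) (hX r (by omega) p)
      (hfit ⟨r.val + 1, h⟩ p.succ)
  rw [monoProps_iff]
  refine ⟨fun hM r h p => (hdiag r h p).1 (hM r h p).1,
    fun hO r h p => ⟨(hdiag r h p).2 (hO r h p), ?_⟩⟩
  refine TSym.lval_lt_lval (hfit ⟨r.val + 1, h⟩ p.castSucc) (hfit ⟨r.val + 1, h⟩ p.succ)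
    (hO r h p).lt ?_
  rintro ⟨j, hj⟩ hwy
  by_cases hr : r.val + 1 + 1 < n
  · have hw := hO ⟨r.val + 1, h⟩ hr p.succ
    rw [Tri.lowerLeft, ← Fin.succ_castSucc] at hw
    exact (hO ⟨r.val + 1, h⟩ hr p.castSucc).add_one_lt hw ⟨j, hj⟩ hwy
  · rw [Tri.lowerLeft, hB ⟨r.val + 1, h⟩ (by simp only; omega) p.castSucc] at hj
    cases hj

end

/-- A triangle all of whose non-bottom rows are `𝒳`-rows is admissible iff it is an
oriented complete monotone triangle. -/
theorem stmt11 (n : ℕ) (t : Tri n) :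
    (IsAdmissible t ∧ ∀ r : Fin n, r.val < n - 1 → IsXRow t r) ↔ IsOCMTTri t := by
  rw [isOCMTTri_iff]
  constructor
  · rintro ⟨⟨hB, -, rk, hR, hM⟩, hX⟩
    exact ⟨hB, hX,
      (monoProps_iff_isOrientedMonotone hB hX hR.1 fun _ => hR.eq_one_of_hasOnlyXRows hX).1 hM⟩
  · rintro ⟨hB, hX, hO⟩
    have hM := (monoProps_iff_isOrientedMonotone (rk := xRank n) hB hX (by simp [xRank])
      fun m _ hm => if_pos hm).2 hO
    exact ⟨⟨hB, hX.wellFormed, xRank n, isRanking_xRank hX, hM⟩, hX⟩
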